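/- arXiv:2408.17050 — 3 statements merged into one kernel-verified Lean document; each statement's English description precedes it below -/
import Mathlib

section
/- The integral ∫₀^∞ u·exp(−u²)·ln(u) du = −γ/4, where γ is the Euler–Mascheroni constant. -/
open MeasureTheory Real Set

lemma integral_log_mul_exp_neg : ∫ t in Ioi (0:ℝ), Real.log t * Real.exp (-t)
    = - Real.eulerMascheroniConstant := by
  -- complex derivative of GammaIntegral at 1
  have hD := Complex.hasDerivAt_GammaIntegral (s := 1) (by norm_num)
  -- Gamma agrees with GammaIntegral near 1
  have hev : Complex.Gamma =ᶠ[nhds (1:ℂ)] Complex.GammaIntegral := by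
    filter_upwards [(isOpen_lt continuous_const Complex.continuous_re).mem_nhds
      (by norm_num : (0:ℝ) < (1:ℂ).re)] with s hs
    exact Complex.Gamma_eq_integral hs
  have hG : HasDerivAt Complex.Gamma
      (∫ t : ℝ in Ioi 0, (t:ℂ) ^ ((1:ℂ) - 1) * (Real.log t * Real.exp (-t))) 1 :=
    hD.congr_of_eventuallyEq hev
  have hG' : HasDerivAt (fun x : ℝ => Complex.Gamma x)
      (∫ t : ℝ in Ioi 0, (t:ℂ) ^ ((1:ℂ) - 1) * (Real.log t * Real.exp (-t))) 1 := by
    simpa using hG.comp_ofReal (z := 1)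
  have hR : HasDerivAt (fun x : ℝ => ((Real.Gamma x : ℂ)))
      ((- Real.eulerMascheroniConstant : ℝ) : ℂ) 1 :=
    Real.hasDerivAt_Gamma_one.ofReal_comp
  have hR' : HasDerivAt (fun x : ℝ => Complex.Gamma x)
      ((- Real.eulerMascheroniConstant : ℝ) : ℂ) 1 := by
    simpa only [Complex.Gamma_ofReal] using hR
  have heq := hG'.unique hR'
  have hcast : (∫ t : ℝ in Ioi 0, (t:ℂ) ^ ((1:ℂ) - 1) * (Real.log t * Real.exp (-t)))
      = ((∫ t in Ioi (0:ℝ), Real.log t * Real.exp (-t) : ℝ) : ℂ) := by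
    simp only [sub_self, Complex.cpow_zero, one_mul, ← Complex.ofReal_mul]
    exact integral_ofReal
  rw [hcast] at heq
  exact_mod_cast heq

/-- ∫₀^∞ u·exp(−u²)·ln(u) du = −γ/4, with γ the Euler–Mascheroni constant. -/
theorem integral_u_exp_neg_sq_log :
    ∫ u in Ioi (0:ℝ), u * Real.exp (-u^2) * Real.log u
      = - Real.eulerMascheroniConstant / 4 := by
  have key := integral_comp_rpow_Ioi (fun t => Real.log t * Real.exp (-t))
    (p := 2) two_ne_zero
  rw [integral_log_mul_exp_neg] at key
  have h1 : (∫ x in Ioi (0:ℝ), (|2| * x ^ ((2:ℝ) - 1)) •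
      (fun t => Real.log t * Real.exp (-t)) (x ^ (2:ℝ)))
      = ∫ x in Ioi (0:ℝ), 4 * (x * Real.exp (-x^2) * Real.log x) := by
    refine setIntegral_congr_fun measurableSet_Ioi fun x hx => ?_
    have h2 : x ^ (2:ℝ) = x ^ 2 := by
      rw [show (2:ℝ) = ((2:ℕ):ℝ) by norm_num, Real.rpow_natCast]
    simp only [h2, smul_eq_mul]
    rw [show (2:ℝ) - 1 = 1 by norm_num, Real.rpow_one, Real.log_pow]
    push_cast
    rw [abs_two]
    ring
  rw [h1, MeasureTheory.integral_const_mul] at key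
  linarith
end

section
/- For P > 0, if T is exponentially distributed with density f(t) = exp(−t) for t ≥ 0, then E[log₂(T + 1/P)] = −log₂(P) − (1/ln 2)·exp(1/P)·Ei(−1/P), where Ei(z) = −∫_{−z}^∞ (exp(−t)/t) dt is the exponential integral. -/
/-!
Integrating by parts against `-exp (-t)`,
`∫₀^∞ log (t + a) e^{-t} dt = log a + ∫₀^∞ e^{-t} / (t + a) dt`, and the substitution `u = t + a`
turns the last integral into `e^a ∫ₐ^∞ e^{-u} / u du = -e^a Ei(-a)`. Take `a = 1/P` and divide by
`log 2`.
-/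

open MeasureTheory Real Set Filter Asymptotics Topology

/-- The exponential integral Ei(z) = −∫_{−z}^∞ exp(−t)/t dt. -/
noncomputable def expIntegralEi (z : ℝ) : ℝ := - ∫ t in Ioi (-z), Real.exp (-t) / t

theorem setIntegral_Ioi_comp_add_right {E : Type*} [NormedAddCommGroup E] [NormedSpace ℝ E]
    (f : ℝ → E) (b d : ℝ) : ∫ x in Ioi b, f (x + d) = ∫ x in Ioi (b + d), f x := by
  have := (measurePreserving_add_right volume d).setIntegral_preimage_emb
    (measurableEmbedding_addRight d) f (Ioi (b + d))
  simpa [preimage_add_const_Ioi] using this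

theorem isBigO_log_add_exp_mul_atTop (a : ℝ) {c : ℝ} (hc : 0 < c) :
    (fun x => log (x + a)) =O[atTop] fun x => exp (c * x) := by
  refine IsBigO.of_bound (c⁻¹ + |a|) ?_
  filter_upwards [eventually_ge_atTop 0, eventually_ge_atTop (1 - a)] with x hx₀ hxa
  have hlog : 0 ≤ log (x + a) := log_nonneg (by linarith)
  have hexp : 1 ≤ exp (c * x) := one_le_exp (by positivity)
  have hx : x ≤ c⁻¹ * exp (c * x) := by
    rw [inv_mul_eq_div, le_div_iff₀ hc]
    linarith [add_one_le_exp (c * x)]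
  rw [norm_of_nonneg hlog, norm_of_nonneg (exp_pos _).le]
  calc log (x + a) ≤ x + a := (log_le_sub_one_of_pos (by linarith)).trans (by linarith)
    _ ≤ c⁻¹ * exp (c * x) + |a| * exp (c * x) := by
      gcongr
      exact (le_abs_self a).trans (le_mul_of_one_le_right (abs_nonneg a) hexp)
    _ = (c⁻¹ + |a|) * exp (c * x) := by ring

theorem Asymptotics.IsBigO.mul_exp_neg {g : ℝ → ℝ} {c : ℝ}
    (hg : g =O[atTop] fun x => exp (c * x)) :
    (fun x => g x * exp (-x)) =O[atTop] fun x => exp (-(1 - c) * x) := by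
  refine (hg.mul (isBigO_refl (fun x => exp (-x)) atTop)).congr_right fun x => ?_
  rw [← exp_add]
  ring_nf

theorem integrableOn_Ioi_mul_exp_neg {g : ℝ → ℝ} {b c : ℝ} (hc : c < 1)
    (hg_cont : ContinuousOn g (Ici b)) (hg : g =O[atTop] fun x => exp (c * x)) :
    IntegrableOn (fun x => g x * exp (-x)) (Ioi b) :=
  integrable_of_isBigO_exp_neg (sub_pos.2 hc)
    (hg_cont.mul (continuous_exp.comp continuous_neg).continuousOn) hg.mul_exp_neg

theorem tendsto_mul_exp_neg_atTop_nhds_zero {g : ℝ → ℝ} {c : ℝ} (hc : c < 1)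
    (hg : g =O[atTop] fun x => exp (c * x)) :
    Tendsto (fun x => g x * exp (-x)) atTop (𝓝 0) := by
  refine hg.mul_exp_neg.trans_tendsto ?_
  simpa using tendsto_id.const_mul_atTop_of_neg (sub_neg.2 hc)

theorem integral_Ioi_log_add_mul_exp_neg {a : ℝ} (ha : 0 < a) :
    ∫ t in Ioi 0, log (t + a) * exp (-t) = log a + ∫ t in Ioi 0, (t + a)⁻¹ * exp (-t) := by
  have hlog := isBigO_log_add_exp_mul_atTop a one_half_pos
  have hinv : (fun x => (x + a)⁻¹) =O[atTop] fun x => exp (0 * x) := by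
    simpa using
      (tendsto_inv_atTop_zero.comp (tendsto_atTop_add_const_right _ a tendsto_id)).isBigO_one ℝ
  have hne : ∀ x ∈ Ici (0 : ℝ), x + a ≠ 0 := fun x hx => by
    have : (0 : ℝ) ≤ x := hx; positivity
  have hint_log := integrableOn_Ioi_mul_exp_neg one_half_lt_one
    ((continuous_add_const a).continuousOn.log hne) hlog
  have hint_inv : IntegrableOn (fun x => (x + a)⁻¹ * exp (-x)) (Ioi 0) :=
    integrableOn_Ioi_mul_exp_neg zero_lt_one ((continuous_add_const a).continuousOn.inv₀ hne) hinv
  have hftc := integral_Ioi_of_hasDerivAt_of_tendsto' (f := fun x => -(log (x + a) * exp (-x)))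
    (f' := fun x => log (x + a) * exp (-x) - (x + a)⁻¹ * exp (-x))
    (fun x hx => ?_) (hint_log.sub hint_inv)
    (tendsto_mul_exp_neg_atTop_nhds_zero one_half_lt_one hlog).neg
  · rw [integral_sub hint_log hint_inv] at hftc
    simpa [sub_eq_iff_eq_add] using hftc
  · have hlog' : HasDerivAt (fun x => log (x + a)) (x + a)⁻¹ x := by
      simpa using ((hasDerivAt_id x).add_const a).log (hne x hx)
    exact (hlog'.mul (hasDerivAt_neg' x).exp).neg.congr_deriv (by ring)

theorem integral_Ioi_inv_add_mul_exp_neg (a : ℝ) :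
    ∫ t in Ioi 0, (t + a)⁻¹ * exp (-t) = exp a * ∫ u in Ioi a, exp (-u) / u := by
  have hshift : ∀ t, (t + a)⁻¹ * exp (-t) = exp a * (exp (-(t + a)) / (t + a)) := fun t => by
    rw [show -t = a + -(t + a) by ring, exp_add]
    ring
  simp_rw [hshift, integral_const_mul,
    setIntegral_Ioi_comp_add_right (fun u => exp (-u) / u), zero_add]

/-- If T has the standard exponential density exp(−t), t ≥ 0, then for P > 0,
E[log₂(T + 1/P)] = −log₂ P − (1/ln 2)·exp(1/P)·Ei(−1/P). -/
theorem exponential_expectation_log (P : ℝ) (hP : 0 < P) :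
    ∫ t in Ioi (0:ℝ), Real.logb 2 (t + 1/P) * Real.exp (-t)
      = - Real.logb 2 P - (1 / Real.log 2) * Real.exp (1/P) * expIntegralEi (-(1/P)) := by
  have hlogb : ∀ t, logb 2 (t + 1 / P) * exp (-t) = log (t + 1 / P) * exp (-t) / log 2 :=
    fun t => by rw [logb, div_mul_eq_mul_div]
  simp_rw [hlogb, integral_div, integral_Ioi_log_add_mul_exp_neg (one_div_pos.2 hP),
    integral_Ioi_inv_add_mul_exp_neg, expIntegralEi, neg_neg, logb, one_div, log_inv]
  ring
end

section
/- Let S₁ be Rayleigh distributed with E[S₁²] = σ_{S₁}², let X ~ N(0,P) and N₁ ~ N(0,σ_{N₁}²), with S₁, X, N₁ independent and P, σ_{N₁}², σ_{S₁}² > 0. After normalizing so that σ_{S₁}² = σ_{N₁}² = 1, E_{S₁}[h(S₁X + N₁)] − h(N₁) = −(1/(2 ln 2))·exp(1/P)·Ei(−1/P), where h denotes differential entropy in bits and the expectation is over S₁ with X fixed to its Gaussian law inside h. -/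
/-!
Substituting u = s² turns the Rayleigh average into an average against exp(−u) on (0, ∞), and
h(v) = h(1) + log v / (2 ln 2), so the left-hand side is ∫₀^∞ exp(−u) log(uP + 1) du / (2 ln 2).
Integrating by parts gives ∫₀^∞ exp(−u) / (u + 1/P) du, which the shift t = u + 1/P turns into
−exp(1/P) Ei(−1/P).
-/

open MeasureTheory Real Set

/-- Differential entropy (in bits) of a Gaussian with variance v. -/
noncomputable def gaussEntropy (v : ℝ) : ℝ :=
  (1/2) * Real.logb 2 (2 * Real.pi * Real.exp 1 * v)

open Filter Topology

theorem gaussEntropy_eq_add_log {v : ℝ} (hv : 0 < v) :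
    gaussEntropy v = gaussEntropy 1 + log v / (2 * log 2) := by
  have hc : 0 < 2 * π * exp 1 := by positivity
  rw [gaussEntropy, gaussEntropy, logb, logb, mul_one, log_mul hc.ne' hv.ne']
  ring

theorem integral_Ioi_comp_add_right {E : Type*} [NormedAddCommGroup E] [NormedSpace ℝ E]
    (g : ℝ → E) (c : ℝ) : ∫ x in Ioi 0, g (x + c) = ∫ x in Ioi c, g x := by
  simpa using ((measurePreserving_add_right volume c).setIntegral_preimage_emb
    (measurableEmbedding_addRight c) g (Ioi c))

theorem integral_mul_exp_neg_sq_smul_comp_sq {E : Type*} [NormedAddCommGroup E]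
    [NormedSpace ℝ E] (g : ℝ → E) :
    ∫ s in Ioi 0, (2 * s * exp (-s ^ 2)) • g (s ^ 2) = ∫ u in Ioi 0, exp (-u) • g u := by
  rw [← integral_comp_rpow_Ioi_of_pos (g := fun u ↦ exp (-u) • g u) two_pos]
  refine setIntegral_congr_fun measurableSet_Ioi fun s _ ↦ ?_
  norm_num [smul_smul]

theorem norm_exp_neg_mul_log_mul_add_one_le {P u : ℝ} (hP : 0 ≤ P) (hu : 0 ≤ u) :
    ‖exp (-u) * log (u * P + 1)‖ ≤ P * (u * exp (-u)) := by
  have hlog : log (u * P + 1) ≤ u * P := by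
    linarith [log_le_sub_one_of_pos (show 0 < u * P + 1 by positivity)]
  rw [norm_mul, norm_of_nonneg (exp_pos _).le, norm_of_nonneg (log_nonneg (by nlinarith))]
  nlinarith [exp_pos (-u)]

theorem integrableOn_exp_neg_mul_log_mul_add_one {P : ℝ} (hP : 0 ≤ P) :
    IntegrableOn (fun u ↦ exp (-u) * log (u * P + 1)) (Ioi 0) := by
  have hdom : IntegrableOn (fun u ↦ P * (u * exp (-u))) (Ioi 0) := by
    simpa [IntegrableOn, mul_comm (exp _), show (2 : ℝ) - 1 = 1 by norm_num] using
      (GammaIntegral_convergent two_pos).const_mul P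
  refine hdom.mono' (by fun_prop) ?_
  filter_upwards [ae_restrict_mem measurableSet_Ioi] with u (hu : 0 < u)
  exact norm_exp_neg_mul_log_mul_add_one_le hP hu.le

theorem tendsto_exp_neg_mul_log_mul_add_one {P : ℝ} (hP : 0 ≤ P) :
    Tendsto (fun u ↦ exp (-u) * log (u * P + 1)) atTop (𝓝 0) := by
  have hdom : Tendsto (fun u ↦ P * (u * exp (-u))) atTop (𝓝 0) := by
    simpa using (tendsto_pow_mul_exp_neg_atTop_nhds_zero 1).const_mul P
  refine squeeze_zero_norm' ?_ hdom
  filter_upwards [eventually_ge_atTop 0] with u hu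
  exact norm_exp_neg_mul_log_mul_add_one_le hP hu

theorem hasDerivAt_log_mul_add_one {P u : ℝ} (hP : 0 < P) (hu : 0 ≤ u) :
    HasDerivAt (fun x ↦ log (x * P + 1)) (1 / (u + P⁻¹)) u := by
  have hpos : u * P + 1 ≠ 0 := by positivity
  convert ((hasDerivAt_mul_const P).add_const 1).log hpos using 1
  field_simp

theorem integrableOn_exp_neg_div_add {a : ℝ} (ha : 0 < a) :
    IntegrableOn (fun u ↦ exp (-u) / (u + a)) (Ioi 0) := by
  refine ((integrableOn_exp_neg_Ioi 0).const_mul a⁻¹).mono'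
    (by fun_prop : Measurable fun u ↦ exp (-u) / (u + a)).aestronglyMeasurable ?_
  filter_upwards [ae_restrict_mem measurableSet_Ioi] with u (hu : 0 < u)
  rw [norm_div, norm_of_nonneg (exp_pos _).le, norm_of_nonneg (by positivity), div_eq_inv_mul]
  gcongr
  linarith

theorem integral_exp_neg_mul_log_mul_add_one {P : ℝ} (hP : 0 < P) :
    ∫ u in Ioi 0, exp (-u) * log (u * P + 1) = ∫ u in Ioi 0, exp (-u) / (u + P⁻¹) := by
  have h_zero : Tendsto (fun u ↦ exp (-u) * log (u * P + 1)) (𝓝[>] 0) (𝓝 0) := by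
    refine tendsto_nhdsWithin_of_tendsto_nhds ?_
    have hcont : ContinuousAt (fun u ↦ exp (-u) * log (u * P + 1)) 0 := by
      fun_prop (disch := norm_num)
    simpa using hcont.tendsto
  have hparts := integral_Ioi_mul_deriv_eq_deriv_mul (a := 0) (a' := 0) (b' := 0)
    (u := fun u ↦ exp (-u)) (v := fun u ↦ log (u * P + 1))
    (fun x _ ↦ (hasDerivAt_neg x).exp) (fun x hx ↦ hasDerivAt_log_mul_add_one hP hx.le)
    (by simpa [Pi.mul_def, div_eq_mul_inv] using integrableOn_exp_neg_div_add (inv_pos.2 hP))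
    (by simpa [Pi.mul_def] using (integrableOn_exp_neg_mul_log_mul_add_one hP.le).neg) h_zero
    (tendsto_exp_neg_mul_log_mul_add_one hP.le)
  simpa [div_eq_mul_inv, integral_neg] using hparts.symm

theorem integral_exp_neg_div_add_eq_expIntegralEi (a : ℝ) :
    ∫ u in Ioi 0, exp (-u) / (u + a) = -exp a * expIntegralEi (-a) := by
  rw [expIntegralEi, neg_neg, neg_mul_neg, ← integral_const_mul, ← integral_Ioi_comp_add_right _ a]
  refine setIntegral_congr_fun measurableSet_Ioi fun u _ ↦ ?_
  rw [mul_div_assoc', ← exp_add]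
  ring_nf

theorem integral_exp_neg_mul_gaussEntropy {P : ℝ} (hP : 0 ≤ P) :
    ∫ u in Ioi 0, exp (-u) * gaussEntropy (u * P + 1)
      = gaussEntropy 1 + (∫ u in Ioi 0, exp (-u) * log (u * P + 1)) / (2 * log 2) := by
  have hsplit : ∀ u ∈ Ioi (0 : ℝ), exp (-u) * gaussEntropy (u * P + 1)
      = exp (-u) * gaussEntropy 1 + exp (-u) * log (u * P + 1) / (2 * log 2) := by
    intro u (hu : 0 < u)
    rw [gaussEntropy_eq_add_log (by positivity)]
    ring
  rw [setIntegral_congr_fun measurableSet_Ioi hsplit,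
    integral_add ((integrableOn_exp_neg_Ioi 0).mul_const _)
      ((integrableOn_exp_neg_mul_log_mul_add_one hP).div_const _),
    integral_mul_const, integral_exp_neg_Ioi_zero, one_mul, integral_div]

/-- `2s·exp(−s²)` on `s > 0` is the Rayleigh density, and for `S₁ = s` the output `sX + N₁` is
Gaussian with variance `s²P + 1`. -/
theorem expected_entropy_rayleigh_faded_gaussian (P : ℝ) (hP : 0 < P) :
    (∫ s in Ioi (0:ℝ), (2 * s * Real.exp (-(s^2))) * gaussEntropy (s^2 * P + 1))
        - gaussEntropy 1
      = -(1 / (2 * Real.log 2)) * Real.exp (1/P) * expIntegralEi (-(1/P)) := by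
  have hsubst := integral_mul_exp_neg_sq_smul_comp_sq fun u ↦ gaussEntropy (u * P + 1)
  simp only [smul_eq_mul] at hsubst
  rw [hsubst, integral_exp_neg_mul_gaussEntropy hP.le, integral_exp_neg_mul_log_mul_add_one hP,
    integral_exp_neg_div_add_eq_expIntegralEi, one_div P]
  ring
end
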